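/- arXiv:2006.13340 — 4 statements merged into one kernel-verified Lean document; each statement's English description precedes it below -/
import Mathlib

section
/- Let D be a function on pairs of probability vectors (of arbitrary finite dimension) satisfying the data processing inequality (monotonicity under column-stochastic matrices applied to both arguments), additivity under tensor (Kronecker) products, and the normalization D((1,0) || (1/2,1/2)) = 1. Then for any probability vector p = (p_1,...,p_n) with p_x > 0, D(e_x || p) = -log_2(p_x), where e_x is the x-th standard basis probability vector. -/
open scoped BigOperators

def IsProbVec {ι : Type} [Fintype ι] (p : ι → ℝ) : Prop :=
  (∀ i, 0 ≤ p i) ∧ ∑ i, p i = 1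

def IsStochastic {α β : Type} [Fintype α] [Fintype β] (E : Matrix α β ℝ) : Prop :=
  (∀ i j, 0 ≤ E i j) ∧ ∀ j, ∑ i, E i j = 1

def kron {m n : ℕ} (p : Fin m → ℝ) (q : Fin n → ℝ) : Fin (m * n) → ℝ :=
  fun i => p (finProdFinEquiv.symm i).1 * q (finProdFinEquiv.symm i).2

/-!
Data processing in both directions (coarse-graining to the test "is the outcome `x`?", and
re-expanding `(1, 0) ↦ e_x`, `(0, 1) ↦ r` where `p = p_x e_x + (1 - p_x) r`) shows that
`D(e_x ‖ p) = f(p_x)` with `f(q) = D((1, 0) ‖ (q, 1 - q))`. Data processing also makes `f`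
antitone, and additivity applied to `e_0 ⊗ e_0 = e_0` gives `f(ab) = f(a) + f(b)`. Hence
`s ↦ f(2^{-s})` is monotone and additive on `[0, ∞)` with value `1` at `1`; comparing
`f(q^m) = m f(q)` with `f(2^{-k}) = k` for `k = ⌊-m log₂ q⌋` pins `f(q)` down to within `1/m`.
-/

open Set Matrix

section ProbVec

variable {ι : Type} [Fintype ι]

lemma IsProbVec.le_one {p : ι → ℝ} (hp : IsProbVec p) (x : ι) : p x ≤ 1 :=
  hp.2 ▸ Finset.single_le_sum (fun i _ => hp.1 i) (Finset.mem_univ x)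

lemma isProbVec_single [DecidableEq ι] (x : ι) :
    IsProbVec (fun i => if i = x then (1 : ℝ) else 0) :=
  ⟨fun i => by positivity, by simp⟩

lemma IsProbVec.eq_single_of_apply_eq_one [DecidableEq ι] {p : ι → ℝ} (hp : IsProbVec p)
    {x : ι} (hx : p x = 1) : p = fun i => if i = x then 1 else 0 := by
  funext i
  split_ifs with hix
  · rw [hix, hx]
  · have := Finset.add_le_sum (fun j _ => hp.1 j) (Finset.mem_univ i) (Finset.mem_univ x) hix
    linarith [hp.1 i, hp.2]

lemma IsProbVec.exists_eq_smul_single_add [DecidableEq ι] {p : ι → ℝ} (hp : IsProbVec p)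
    (x : ι) : ∃ r : ι → ℝ, IsProbVec r ∧
      p = p x • (fun i => if i = x then 1 else 0) + (1 - p x) • r := by
  set e : ι → ℝ := fun i => if i = x then 1 else 0
  rcases (hp.le_one x).eq_or_lt with hx | hx
  · exact ⟨e, isProbVec_single x, by simp [hp.eq_single_of_apply_eq_one hx, e]⟩
  have hx' : 0 < 1 - p x := sub_pos.2 hx
  refine ⟨(1 - p x)⁻¹ • (p - p x • e), ⟨fun i => ?_, ?_⟩, ?_⟩
  · have : 0 ≤ p i - p x * e i := by by_cases hi : i = x <;> simp [e, hi, hp.1 i]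
    simpa using mul_nonneg (inv_nonneg.2 hx'.le) this
  · simp [e, ← Finset.mul_sum, Finset.sum_sub_distrib, hp.2, hx'.ne']
  · rw [smul_smul, mul_inv_cancel₀ hx'.ne', one_smul, add_sub_cancel]

lemma isProbVec_pair {q : ℝ} (hq : q ∈ Icc 0 1) : IsProbVec ![q, 1 - q] :=
  ⟨fun i => by fin_cases i <;> simp [hq.1, hq.2], by simp⟩

end ProbVec

section Channels

variable {ι : Type}

def testMatrix (w : ι → ℝ) : Matrix (Fin 2) ι ℝ := Matrix.of ![w, 1 - w]

lemma isStochastic_testMatrix [Fintype ι] {w : ι → ℝ} (hw : ∀ i, w i ∈ Icc 0 1) :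
    IsStochastic (testMatrix w) :=
  ⟨fun i j => by fin_cases i <;> simp [testMatrix, (hw j).1, (hw j).2], fun j => by
    simp [testMatrix]⟩

lemma testMatrix_mulVec [Fintype ι] (w : ι → ℝ) {p : ι → ℝ} (hp : ∑ i, p i = 1) :
    testMatrix w *ᵥ p = ![w ⬝ᵥ p, 1 - w ⬝ᵥ p] := by
  ext i
  fin_cases i
  · rfl
  · change (1 - w) ⬝ᵥ p = 1 - w ⬝ᵥ p
    rw [sub_dotProduct, one_dotProduct, hp]

def mixMatrix (u v : ι → ℝ) : Matrix ι (Fin 2) ℝ := (Matrix.of ![u, v])ᵀ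

lemma isStochastic_mixMatrix [Fintype ι] {u v : ι → ℝ} (hu : IsProbVec u) (hv : IsProbVec v) :
    IsStochastic (mixMatrix u v) :=
  ⟨fun i j => by fin_cases j <;> simp [mixMatrix, hu.1 i, hv.1 i], fun j => by
    fin_cases j <;> simp [mixMatrix, hu.2, hv.2]⟩

lemma mixMatrix_mulVec (u v : ι → ℝ) (a b : ℝ) :
    mixMatrix u v *ᵥ ![a, b] = a • u + b • v := by
  ext i
  simp [mixMatrix, mulVec_transpose, vecMul, dotProduct, Fin.sum_univ_two]

end Channels

lemma isProbVec_one_zero : IsProbVec (![1, 0] : Fin 2 → ℝ) := by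
  simpa using isProbVec_pair (q := 1) ⟨zero_le_one, le_rfl⟩

lemma vec_one_zero_eq_single : (![1, 0] : Fin 2 → ℝ) = fun i => if i = 0 then 1 else 0 := by
  ext i
  fin_cases i <;> rfl

section Kron

variable {m n : ℕ}

lemma kron_apply_finProdFinEquiv (p : Fin m → ℝ) (q : Fin n → ℝ) (i : Fin m) (j : Fin n) :
    kron p q (finProdFinEquiv (i, j)) = p i * q j := by
  simp [kron]

lemma isProbVec_kron {p : Fin m → ℝ} {q : Fin n → ℝ} (hp : IsProbVec p) (hq : IsProbVec q) :
    IsProbVec (kron p q) := by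
  refine ⟨fun i => mul_nonneg (hp.1 _) (hq.1 _), ?_⟩
  rw [← finProdFinEquiv.sum_comp]
  simp [kron_apply_finProdFinEquiv, Fintype.sum_prod_type, ← Finset.mul_sum, hp.2, hq.2]

lemma kron_single (x : Fin m) (y : Fin n) :
    kron (fun i => if i = x then (1 : ℝ) else 0) (fun j => if j = y then 1 else 0) =
      fun k => if k = finProdFinEquiv (x, y) then 1 else 0 := by
  funext k
  obtain ⟨⟨i, j⟩, rfl⟩ := finProdFinEquiv.surjective k
  by_cases hi : i = x <;> by_cases hj : j = y <;> simp [kron_apply_finProdFinEquiv, hi, hj]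

end Kron

section Divergence

variable (D : ∀ n : ℕ, (Fin n → ℝ) → (Fin n → ℝ) → EReal)

def DataProcessing : Prop :=
  ∀ (n m : ℕ) (p q : Fin n → ℝ) (E : Matrix (Fin m) (Fin n) ℝ),
    IsProbVec p → IsProbVec q → IsStochastic E → D m (E.mulVec p) (E.mulVec q) ≤ D n p q

def TensorAdditive : Prop :=
  ∀ (n m : ℕ) (p q : Fin n → ℝ) (p' q' : Fin m → ℝ),
    IsProbVec p → IsProbVec q → IsProbVec p' → IsProbVec q' →
    D (n * m) (kron p p') (kron q q') = D n p q + D m p' q'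

def binaryDiv (q : ℝ) : EReal := D 2 ![1, 0] ![q, 1 - q]

variable {D}

lemma apply_single_eq_binaryDiv (hD : DataProcessing D) {n : ℕ} {p : Fin n → ℝ}
    (hp : IsProbVec p) (x : Fin n) :
    D n (fun i => if i = x then 1 else 0) p = binaryDiv D (p x) := by
  set e : Fin n → ℝ := fun i => if i = x then 1 else 0
  have he : IsProbVec e := isProbVec_single x
  apply le_antisymm
  · obtain ⟨r, hr, hpr⟩ := hp.exists_eq_smul_single_add x
    have := hD 2 n _ _ (mixMatrix e r) isProbVec_one_zero (isProbVec_pair ⟨hp.1 x, hp.le_one x⟩)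
      (isStochastic_mixMatrix he hr)
    rwa [mixMatrix_mulVec, mixMatrix_mulVec, ← hpr, one_smul, zero_smul, add_zero] at this
  · have := hD n 2 e p (testMatrix e) he hp
      (isStochastic_testMatrix fun i => ⟨he.1 i, he.le_one i⟩)
    have hee : e ⬝ᵥ e = 1 := by simp [e, dotProduct]
    have hep : e ⬝ᵥ p = p x := by simp [e, dotProduct]
    rw [testMatrix_mulVec _ he.2, testMatrix_mulVec _ hp.2, hee, hep, sub_self] at this
    exact this

lemma binaryDiv_antitoneOn (hD : DataProcessing D) : AntitoneOn (binaryDiv D) (Icc 0 1) := by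
  intro a ha b hb hab
  rcases ha.2.eq_or_lt with rfl | ha1
  · rw [le_antisymm hb.2 hab]
  have ha1' : 0 < 1 - a := sub_pos.2 ha1
  set c := (b - a) / (1 - a)
  have hc : c ∈ Icc 0 1 :=
    ⟨div_nonneg (by linarith) ha1'.le, (div_le_one ha1').2 (by linarith [hb.2])⟩
  have hcb : ![1, c] ⬝ᵥ ![a, 1 - a] = b := by
    simp only [c, dotProduct_cons, head_cons, tail_cons, dotProduct_of_isEmpty, one_mul, add_zero]
    rw [div_mul_cancel₀ _ ha1'.ne']
    ring
  have := hD 2 2 _ _ (testMatrix ![1, c]) isProbVec_one_zero (isProbVec_pair ha)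
    (isStochastic_testMatrix fun i => by fin_cases i <;> simp [hc.1, hc.2])
  have hc1 : ![1, c] ⬝ᵥ ![1, 0] = 1 := by simp
  rw [testMatrix_mulVec _ isProbVec_one_zero.2, testMatrix_mulVec _ (isProbVec_pair ha).2, hc1,
    hcb, sub_self] at this
  exact this

lemma binaryDiv_mul (hD : DataProcessing D) (hA : TensorAdditive D) {a b : ℝ} (ha : a ∈ Icc 0 1)
    (hb : b ∈ Icc 0 1) : binaryDiv D (a * b) = binaryDiv D a + binaryDiv D b := by
  have hab : kron ![a, 1 - a] ![b, 1 - b] (finProdFinEquiv (0, 0)) = a * b :=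
    kron_apply_finProdFinEquiv _ _ 0 0
  rw [← hab, ← apply_single_eq_binaryDiv hD
    (isProbVec_kron (isProbVec_pair ha) (isProbVec_pair hb)), ← kron_single,
    ← vec_one_zero_eq_single]
  exact hA 2 2 _ _ _ _ isProbVec_one_zero (isProbVec_pair ha) isProbVec_one_zero (isProbVec_pair hb)

end Divergence

lemma eq_self_of_monotoneOn_of_map_add {h : ℝ → ℝ} (hmono : MonotoneOn h (Ici 0))
    (hadd : ∀ s t, 0 ≤ s → 0 ≤ t → h (s + t) = h s + h t) (h1 : h 1 = 1)
    {s : ℝ} (hs : 0 ≤ s) : h s = s := by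
  have h0 : h 0 = 0 := by simpa using hadd 0 0 le_rfl le_rfl
  have hnsmul : ∀ (m : ℕ) {t : ℝ}, 0 ≤ t → h (m * t) = m * h t := by
    intro m t ht
    induction m with
    | zero => simp [h0]
    | succ m ih => rw [Nat.cast_succ, add_one_mul, hadd _ _ (by positivity) ht, ih, add_one_mul]
  have hbound : ∀ m : ℕ, (m : ℝ) * |h s - s| ≤ 1 := by
    intro m
    have hms : 0 ≤ (m : ℝ) * s := by positivity
    set k := ⌊(m : ℝ) * s⌋₊
    have hk : h k = k := by simpa [h1] using hnsmul k zero_le_one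
    have hk1 : h (k + 1) = k + 1 := by simpa [h1] using hnsmul (k + 1) zero_le_one
    have hlower : (k : ℝ) ≤ m * h s := by
      rw [← hk, ← hnsmul m hs]
      exact hmono (mem_Ici.2 (Nat.cast_nonneg k)) hms (Nat.floor_le hms)
    have hupper : m * h s ≤ k + 1 := by
      rw [← hk1, ← hnsmul m hs]
      exact hmono hms (mem_Ici.2 (by positivity)) (Nat.lt_floor_add_one _).le
    have : |(m : ℝ) * h s - m * s| ≤ 1 := abs_le.2
      ⟨by linarith [Nat.lt_floor_add_one ((m : ℝ) * s)], by linarith [Nat.floor_le hms]⟩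
    rwa [← mul_sub, abs_mul, Nat.abs_cast] at this
  by_contra hne
  obtain ⟨m, hm⟩ := exists_lt_nsmul (abs_pos.2 (sub_ne_zero.2 hne)) 1
  linarith [hbound m, nsmul_eq_mul m |h s - s|]

lemma EReal.eq_self_of_monotoneOn_of_map_add {h : ℝ → EReal} (hmono : MonotoneOn h (Ici 0))
    (hadd : ∀ s t, 0 ≤ s → 0 ≤ t → h (s + t) = h s + h t) (h1 : h 1 = 1)
    {s : ℝ} (hs : 0 ≤ s) : h s = s := by
  have h0 : h 0 = 0 := by
    have : 1 + h 0 = 1 := by rw [← h1, ← hadd 1 0 zero_le_one le_rfl, add_zero]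
    generalize h 0 = x at this ⊢
    induction x using EReal.rec with
    | bot => exact absurd this (EReal.bot_lt_coe 1).ne
    | top => exact absurd this (EReal.coe_lt_top 1).ne'
    | coe r => norm_cast at this ⊢; linarith
  have hnat : ∀ k : ℕ, h k = k := by
    intro k
    induction k with
    | zero => simpa using h0
    | succ k ih =>
      rw [Nat.cast_succ, hadd _ _ (Nat.cast_nonneg k) zero_le_one, ih, h1]
      norm_cast
  have hreal : ∀ t ∈ Ici (0 : ℝ), h t = ((h t).toReal : EReal) := by
    intro t ht
    have hlower : 0 ≤ h t := h0 ▸ hmono self_mem_Ici ht ht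
    have hupper : h t ≤ ⌈t⌉₊ :=
      hnat _ ▸ hmono ht (mem_Ici.2 (Nat.cast_nonneg _)) (Nat.le_ceil t)
    exact (EReal.coe_toReal (hupper.trans_lt (EReal.coe_lt_top _)).ne
      (EReal.bot_lt_zero.trans_le hlower).ne').symm
  have key : (h s).toReal = s := by
    refine _root_.eq_self_of_monotoneOn_of_map_add (h := fun t => (h t).toReal) ?_ ?_ ?_ hs
    · intro a ha b hb hab
      rw [← EReal.coe_le_coe_iff, ← hreal a ha, ← hreal b hb]
      exact hmono ha hb hab
    · intro a b ha hb
      rw [← EReal.coe_eq_coe_iff, EReal.coe_add, ← hreal a ha, ← hreal b hb,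
        ← hreal (a + b) (add_nonneg ha hb)]
      exact hadd a b ha hb
    · simp [h1]
  rw [hreal s hs, key]

lemma eq_neg_logb_of_antitoneOn_of_map_mul {f : ℝ → EReal} (hanti : AntitoneOn f (Ioc 0 1))
    (hmul : ∀ a ∈ Ioc (0 : ℝ) 1, ∀ b ∈ Ioc (0 : ℝ) 1, f (a * b) = f a + f b)
    (hhalf : f (1 / 2) = 1) {q : ℝ} (hq : q ∈ Ioc 0 1) :
    f q = ((-Real.logb 2 q : ℝ) : EReal) := by
  have hmem : ∀ s ∈ Ici (0 : ℝ), (2 : ℝ) ^ (-s) ∈ Ioc 0 1 := fun s hs =>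
    ⟨Real.rpow_pos_of_pos two_pos _,
      Real.rpow_le_one_of_one_le_of_nonpos one_le_two (neg_nonpos.2 hs)⟩
  have key := EReal.eq_self_of_monotoneOn_of_map_add (h := fun s => f ((2 : ℝ) ^ (-s)))
    (fun s hs t ht hst => hanti (hmem t ht) (hmem s hs)
      (Real.rpow_le_rpow_of_exponent_le one_le_two (neg_le_neg hst)))
    (fun s t hs ht => by
      simp only [neg_add, Real.rpow_add two_pos]
      exact hmul _ (hmem s hs) _ (hmem t ht))
    (by simpa [Real.rpow_neg_one] using hhalf)
    (neg_nonneg.2 (Real.logb_nonpos one_lt_two hq.1.le hq.2))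
  rwa [neg_neg, Real.rpow_logb two_pos (by norm_num) hq.1] at key

/-- If `D` is a classical relative entropy (data processing under column-stochastic
matrices, additivity under Kronecker products, and normalization), then
`D(e_x ‖ p) = -log₂ (p x)` for any probability vector `p` with `p x > 0`. -/
theorem stmt0
    (D : ∀ n : ℕ, (Fin n → ℝ) → (Fin n → ℝ) → EReal)
    (hDPI : ∀ (n m : ℕ) (p q : Fin n → ℝ) (E : Matrix (Fin m) (Fin n) ℝ),
      IsProbVec p → IsProbVec q → IsStochastic E →
      D m (E.mulVec p) (E.mulVec q) ≤ D n p q)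
    (hAdd : ∀ (n m : ℕ) (p q : Fin n → ℝ) (p' q' : Fin m → ℝ),
      IsProbVec p → IsProbVec q → IsProbVec p' → IsProbVec q' →
      D (n * m) (kron p p') (kron q q') = D n p q + D m p' q')
    (hNorm : D 2 ![1, 0] ![1/2, 1/2] = 1) :
    ∀ (n : ℕ) (p : Fin n → ℝ) (x : Fin n), IsProbVec p → 0 < p x →
      D n (fun i => if i = x then 1 else 0) p = ((-Real.logb 2 (p x) : ℝ) : EReal) := by
  intro n p x hp hx
  have hhalf : binaryDiv D (1 / 2) = 1 := by norm_num [binaryDiv, hNorm]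
  rw [apply_single_eq_binaryDiv hDPI hp x]
  exact eq_neg_logb_of_antitoneOn_of_map_mul
    ((binaryDiv_antitoneOn hDPI).mono Ioc_subset_Icc_self)
    (fun a ha b hb => binaryDiv_mul hDPI hAdd (Ioc_subset_Icc_self ha) (Ioc_subset_Icc_self hb))
    hhalf ⟨hx, hp.le_one x⟩
end

section
/- Let p, q be probability vectors in R^n with all components of q positive and rational, say q_x = n_x/n with n_x ∈ N and Σ_x n_x = n. Let r ∈ R^n' be the probability vector obtained by concatenating, for each x, the block consisting of n_x copies of p_x/n_x, and let u be the uniform distribution on n outcomes. Then (p,q) and (r,u) are equivalent under relative majorization: there exist column-stochastic matrices E and F with (Ep, Eq) = (r, u) and (Fr, Fu) = (p, q). -/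
/-!
Refining outcome `x` into `m x` equally likely sub-outcomes is a stochastic map `E` that sends
`p` to `r` and `q` to `u`, since `q x / m x = 1 / N`. Coarse-graining the sub-outcomes back is a
stochastic map `F` with `F * E = 1`, so it sends `r = E p` to `p` and `u = E q` to `q`.
-/

open scoped BigOperators

namespace RelativeMajorization

open Matrix

variable {ι : Type} [Fintype ι] [DecidableEq ι] (κ : ι → Type) [∀ x, Fintype (κ x)]

noncomputable def splitMatrix : Matrix (Σ x, κ x) ι ℝ :=
  Matrix.of fun i y => if y = i.1 then (Fintype.card (κ i.1) : ℝ)⁻¹ else 0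

def mergeMatrix : Matrix ι (Σ x, κ x) ℝ :=
  Matrix.of fun y i => if i.1 = y then 1 else 0

variable {κ}

theorem splitMatrix_mulVec (v : ι → ℝ) (i : Σ x, κ x) :
    (splitMatrix κ *ᵥ v) i = v i.1 / Fintype.card (κ i.1) := by
  simp [splitMatrix, mulVec, dotProduct, ite_mul, div_eq_inv_mul]

theorem mergeMatrix_mulVec (v : (Σ x, κ x) → ℝ) (y : ι) :
    (mergeMatrix κ *ᵥ v) y = ∑ k, v ⟨y, k⟩ := by
  simp only [mergeMatrix, mulVec, dotProduct, of_apply, ite_mul, one_mul,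
    zero_mul, ← Finset.univ_sigma_univ, Finset.sum_sigma]
  rw [Finset.sum_eq_single y (fun x _ hx => by simp [hx]) (by simp)]
  simp

theorem mergeMatrix_mulVec_splitMatrix_mulVec (hκ : ∀ x, Nonempty (κ x)) (v : ι → ℝ) :
    mergeMatrix κ *ᵥ (splitMatrix κ *ᵥ v) = v := funext fun y => by
  have hcard : (Fintype.card (κ y) : ℝ) ≠ 0 :=
    Nat.cast_ne_zero.mpr (@Fintype.card_ne_zero _ _ (hκ y))
  calc (mergeMatrix κ *ᵥ (splitMatrix κ *ᵥ v)) y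
      = ∑ _k : κ y, v y / Fintype.card (κ y) :=
        (mergeMatrix_mulVec _ y).trans
          (Finset.sum_congr rfl fun k _ => splitMatrix_mulVec v ⟨y, k⟩)
    _ = v y := by
        rw [Finset.sum_const, Finset.card_univ, nsmul_eq_mul, mul_div_cancel₀ _ hcard]

theorem mergeMatrix_mul_splitMatrix (hκ : ∀ x, Nonempty (κ x)) :
    mergeMatrix κ * splitMatrix κ = 1 :=
  ext_of_mulVec_single fun z => by
    rw [← mulVec_mulVec, mergeMatrix_mulVec_splitMatrix_mulVec hκ, one_mulVec]

theorem isStochastic_mergeMatrix : IsStochastic (mergeMatrix κ) :=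
  ⟨fun y i => by simp only [mergeMatrix, of_apply]; split_ifs <;> norm_num,
    fun i => by simp [mergeMatrix]⟩

theorem isStochastic_splitMatrix (hκ : ∀ x, Nonempty (κ x)) : IsStochastic (splitMatrix κ) := by
  refine ⟨fun i y => by simp only [splitMatrix, of_apply]; split_ifs <;> positivity, fun y => ?_⟩
  calc ∑ i, splitMatrix κ i y = ∑ i, (∑ x, mergeMatrix κ x i) * splitMatrix κ i y := by
        simp only [isStochastic_mergeMatrix.2, one_mul]
    _ = ∑ x, (mergeMatrix κ * splitMatrix κ) x y := by
        simp only [mul_apply, Finset.sum_mul]; exact Finset.sum_comm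
    _ = 1 := by simp [mergeMatrix_mul_splitMatrix hκ, one_apply]

end RelativeMajorization

open RelativeMajorization

theorem stmt4_general
    (n : ℕ) (p q : Fin n → ℝ)
    (m : Fin n → ℕ) (hm : ∀ x, 0 < m x) (N : ℕ)
    (hqm : ∀ x, q x = (m x : ℝ) / (N : ℝ))
    (r : (Σ x : Fin n, Fin (m x)) → ℝ) (hr : ∀ i, r i = p i.1 / (m i.1 : ℝ))
    (u : (Σ x : Fin n, Fin (m x)) → ℝ) (hu : ∀ i, u i = 1 / (N : ℝ)) :
    (∃ E : Matrix (Σ x : Fin n, Fin (m x)) (Fin n) ℝ,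
        IsStochastic E ∧ E.mulVec p = r ∧ E.mulVec q = u) ∧
    (∃ F : Matrix (Fin n) (Σ x : Fin n, Fin (m x)) ℝ,
        IsStochastic F ∧ F.mulVec r = p ∧ F.mulVec u = q) := by
  have hne : ∀ x, Nonempty (Fin (m x)) := fun x => Fin.pos_iff_nonempty.mp (hm x)
  have hEp : (splitMatrix fun x => Fin (m x)).mulVec p = r := funext fun i => by
    rw [splitMatrix_mulVec, hr, Fintype.card_fin]
  have hEq : (splitMatrix fun x => Fin (m x)).mulVec q = u := funext fun i => by
    have hmi : (m i.1 : ℝ) ≠ 0 := Nat.cast_ne_zero.mpr (hm i.1).ne'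
    rw [splitMatrix_mulVec, hu, hqm, Fintype.card_fin, div_div_cancel_left' hmi, one_div]
  refine ⟨⟨splitMatrix _, isStochastic_splitMatrix hne, hEp, hEq⟩,
    ⟨mergeMatrix _, isStochastic_mergeMatrix, ?_, ?_⟩⟩
  · rw [← hEp, mergeMatrix_mulVec_splitMatrix_mulVec hne]
  · rw [← hEq, mergeMatrix_mulVec_splitMatrix_mulVec hne]

/-- If `q` has positive rational components `q x = m x / N` with `N = ∑ m x`,
then `(p, q)` is equivalent under relative majorization to `(r, u)` where `r`
consists of the blocks of `m x` copies of `p x / m x`, and `u` is the uniform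
distribution on `N` outcomes. -/
theorem stmt4
    (n : ℕ) (p q : Fin n → ℝ) (hp : IsProbVec p) (hq : IsProbVec q)
    (m : Fin n → ℕ) (hm : ∀ x, 0 < m x) (N : ℕ) (hN : N = ∑ x, m x)
    (hqm : ∀ x, q x = (m x : ℝ) / (N : ℝ))
    (r : (Σ x : Fin n, Fin (m x)) → ℝ) (hr : ∀ i, r i = p i.1 / (m i.1 : ℝ))
    (u : (Σ x : Fin n, Fin (m x)) → ℝ) (hu : ∀ i, u i = 1 / (N : ℝ)) :
    (∃ E : Matrix (Σ x : Fin n, Fin (m x)) (Fin n) ℝ,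
        IsStochastic E ∧ E.mulVec p = r ∧ E.mulVec q = u) ∧
    (∃ F : Matrix (Fin n) (Σ x : Fin n, Fin (m x)) ℝ,
        IsStochastic F ∧ F.mulVec r = p ∧ F.mulVec u = q) :=
  stmt4_general n p q m hm N hqm r hr u hu
end

section
/- Blackwell's theorem: For probability vectors p, q ∈ R^n and p', q' ∈ R^m, there exists a column-stochastic matrix E with Ep = p' and Eq = q' if and only if the testing region T(p',q') is contained in T(p,q), where T(p,q) := {(p·t, q·t) ∈ R^2 : t ∈ R^n, 0 ≤ t_i ≤ 1 for all i}. -/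
open scoped BigOperators

/-- The testing region of a pair of probability vectors. -/
def testingRegion {n : ℕ} (p q : Fin n → ℝ) : Set (ℝ × ℝ) :=
  {y | ∃ t : Fin n → ℝ, (∀ i, 0 ≤ t i ∧ t i ≤ 1) ∧
    y = (∑ i, p i * t i, ∑ i, q i * t i)}

/-!
The easy direction pushes a test through `E`: if `t'` is a test on `Fin m`, then `t' ᵥ* E` is a
test on `Fin n` with the same success probabilities.

For the converse, if `(p', q')` is not of the form `(E p, E q)`, Hahn–Banach separates it from the
compact convex set of such pairs by a functional `f`. Put `gᵢ (x, y) = f (x eᵢ, y eᵢ)` and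
`φ = ⨆ᵢ gᵢ`. A deterministic matrix sending each `j` to a maximiser of `gᵢ (pⱼ, qⱼ)` gives
`∑ⱼ φ (pⱼ, qⱼ) < f (p', q') ≤ ∑ᵢ φ (p'ᵢ, q'ᵢ)`, so it suffices that
`∑ᵢ φ (p'ᵢ, q'ᵢ) ≤ ∑ⱼ φ (pⱼ, qⱼ)` for every sublinear `φ`. On the quadrant
`φ (x, y) = (x + y) ψ (y / (x + y))` with `ψ s = φ (1 - s, s)` convex, and on any finite set `ψ`
agrees with an affine function plus a nonnegative combination of hinges `(s - u)⁺`. Homogenised, a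
hinge becomes `(-u x + (1 - u) y)⁺`, and testing the inclusion of testing regions against the
indicator of `{a p'ᵢ + b q'ᵢ ≥ 0}` gives `∑ᵢ (a p'ᵢ + b q'ᵢ)⁺ ≤ ∑ⱼ (a pⱼ + b qⱼ)⁺`.
-/

open Finset Matrix

def hingeSum (γ δ : ℝ) {K : ℕ} (c u : Fin K → ℝ) (s : ℝ) : ℝ :=
  γ + δ * s + ∑ k, c k * max (s - u k) 0

lemma hingeSum_cons (γ δ κ a s : ℝ) {K : ℕ} (c u : Fin K → ℝ) :
    hingeSum γ δ (Fin.cons κ c) (Fin.cons a u) s = hingeSum γ δ c u s + κ * max (s - a) 0 := by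
  simp only [hingeSum, Fin.sum_univ_succ, Fin.cons_zero, Fin.cons_succ]
  ring

lemma hingeSum_eq_add_of_knots_le {γ δ t s : ℝ} {K : ℕ} {c u : Fin K → ℝ} (hu : ∀ k, u k ≤ t)
    (hts : t ≤ s) : hingeSum γ δ c u s = hingeSum γ δ c u t + (δ + ∑ k, c k) * (s - t) := by
  have hs : ∀ k, max (s - u k) 0 = s - u k := fun k => max_eq_left (by linarith [hu k])
  have ht : ∀ k, max (t - u k) 0 = t - u k := fun k => max_eq_left (by linarith [hu k])
  have hsum : ∑ k, c k * (s - u k) = ∑ k, c k * (t - u k) + (∑ k, c k) * (s - t) := by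
    rw [sum_mul, ← sum_add_distrib]
    exact sum_congr rfl fun k _ => by ring
  simp only [hingeSum, hs, ht, hsum]
  ring

noncomputable def secant (ψ : ℝ → ℝ) (x y s : ℝ) : ℝ :=
  ψ x + (ψ y - ψ x) / (y - x) * (s - x)

section Interpolation

variable {ψ : ℝ → ℝ}

lemma secant_right {x y : ℝ} (hxy : x ≠ y) : secant ψ x y y = ψ y := by
  rw [secant, div_mul_cancel₀ _ (sub_ne_zero.2 hxy.symm)]
  ring

lemma ConvexOn.secant_le (hψ : ConvexOn ℝ Set.univ ψ) {x y s : ℝ} (hxy : x < y) (hys : y ≤ s) :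
    secant ψ x y s ≤ ψ s := by
  have hslope := hψ.secant_mono (Set.mem_univ x) (Set.mem_univ y) (Set.mem_univ s) hxy.ne'
    (by linarith : s ≠ x) hys
  rw [le_div_iff₀ (by linarith : 0 < s - x)] at hslope
  rw [secant]
  linarith

lemma exists_hingeSum_cons_eq_secant {a t₁ γ δ : ℝ} {K : ℕ} {c u : Fin K → ℝ} (hat : a < t₁)
    (hu : ∀ k, u k ≤ a) (hRa : hingeSum γ δ c u a = ψ a) (hRt : hingeSum γ δ c u t₁ ≤ ψ t₁) :
    ∃ κ, 0 ≤ κ ∧ ∀ s, a ≤ s → hingeSum γ δ (Fin.cons κ c) (Fin.cons a u) s = secant ψ a t₁ s := by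
  rw [hingeSum_eq_add_of_knots_le hu hat.le, hRa] at hRt
  refine ⟨(ψ t₁ - ψ a) / (t₁ - a) - (δ + ∑ k, c k), ?_, fun s hs => ?_⟩
  · rw [sub_nonneg, le_div_iff₀ (sub_pos.2 hat)]
    linarith
  · rw [hingeSum_cons, hingeSum_eq_add_of_knots_le hu hs, hRa, max_eq_left (sub_nonneg.2 hs),
      secant]
    ring

/-- The last conjunct is what makes the coefficient of the next hinge nonnegative. -/
lemma ConvexOn.exists_hingeSum_of_lt (hψ : ConvexOn ℝ Set.univ ψ) (T : Finset ℝ) :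
    ∀ t₁, (∀ t ∈ T, t < t₁) → ∃ (γ δ : ℝ) (K : ℕ) (c u : Fin K → ℝ), (∀ k, 0 ≤ c k) ∧
      (∀ k, u k ≤ t₁) ∧ (∀ t ∈ insert t₁ T, hingeSum γ δ c u t = ψ t) ∧
      ∀ s, t₁ ≤ s → hingeSum γ δ c u s ≤ ψ s := by
  induction T using Finset.induction_on_max with
  | empty =>
    intro t₁ _
    set δ := ψ t₁ - ψ (t₁ - 1)
    have hline : ∀ s, hingeSum (ψ (t₁ - 1) - δ * (t₁ - 1)) δ ![] ![] s
        = secant ψ (t₁ - 1) t₁ s := fun s => by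
      simp only [hingeSum, secant, univ_eq_empty, sum_empty, sub_sub_cancel, div_one, δ]
      ring
    refine ⟨ψ (t₁ - 1) - δ * (t₁ - 1), δ, 0, ![], ![], finZeroElim, finZeroElim, ?_,
      fun s hs => ?_⟩
    · simp [hline, secant_right]
    · exact hline s ▸ hψ.secant_le (by linarith) hs
  | insert a T hTa ih =>
    intro t₁ ht₁
    have hat : a < t₁ := ht₁ a (mem_insert_self a T)
    obtain ⟨γ, δ, K, c, u, hc, hu, heq, hle⟩ := ih a hTa
    obtain ⟨κ, hκ, hR⟩ :=
      exists_hingeSum_cons_eq_secant hat hu (heq a (mem_insert_self a T)) (hle t₁ hat.le)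
    refine ⟨γ, δ, K + 1, Fin.cons κ c, Fin.cons a u, Fin.cases hκ hc,
      Fin.cases hat.le fun k => (hu k).trans hat.le, fun t ht => ?_, fun s hs => ?_⟩
    · rcases mem_insert.1 ht with rfl | ht
      · rw [hR t hat.le, secant_right hat.ne]
      · have hta : t ≤ a := (mem_insert.1 ht).elim le_of_eq fun h => (hTa t h).le
        rw [hingeSum_cons, max_eq_right (sub_nonpos.2 hta), mul_zero, add_zero]
        exact heq t ht
    · exact hR s (hat.le.trans hs) ▸ hψ.secant_le hat hs

lemma ConvexOn.exists_hingeSum_eqOn (hψ : ConvexOn ℝ Set.univ ψ) (T : Finset ℝ) :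
    ∃ (γ δ : ℝ) (K : ℕ) (c u : Fin K → ℝ), (∀ k, 0 ≤ c k) ∧
      ∀ t ∈ T, hingeSum γ δ c u t = ψ t := by
  obtain ⟨M, hM⟩ := T.exists_le
  obtain ⟨γ, δ, K, c, u, hc, -, heq, -⟩ :=
    hψ.exists_hingeSum_of_lt T (M + 1) fun t ht => (hM t ht).trans_lt (lt_add_one M)
  exact ⟨γ, δ, K, c, u, hc, fun t ht => heq t (mem_insert_of_mem ht)⟩

end Interpolation

lemma mul_hingeSum_div_add (γ δ : ℝ) {K : ℕ} (c u : Fin K → ℝ) {x y : ℝ} (hx : 0 ≤ x)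
    (hy : 0 ≤ y) :
    (x + y) * hingeSum γ δ c u (y / (x + y))
      = γ * x + (γ + δ) * y + ∑ k, c k * max (-u k * x + (1 - u k) * y) 0 := by
  rcases (add_nonneg hx hy).eq_or_lt with hw | hw
  · obtain ⟨rfl, rfl⟩ : x = 0 ∧ y = 0 := ⟨by linarith, by linarith⟩
    simp
  have hhinge : ∀ k, (x + y) * (c k * max (y / (x + y) - u k) 0)
      = c k * max (-u k * x + (1 - u k) * y) 0 := by
    intro k
    rw [mul_left_comm, mul_max_of_nonneg _ _ hw.le, mul_zero, mul_sub, mul_div_cancel₀ _ hw.ne']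
    ring_nf
  simp only [hingeSum, mul_add, mul_sum, hhinge]
  rw [mul_left_comm, mul_div_cancel₀ _ hw.ne']
  ring

lemma sum_max_le_of_testingRegion_subset {n m : ℕ} {p q : Fin n → ℝ} {p' q' : Fin m → ℝ}
    (hsub : testingRegion p' q' ⊆ testingRegion p q) (a b : ℝ) :
    ∑ i, max (a * p' i + b * q' i) 0 ≤ ∑ j, max (a * p j + b * q j) 0 := by
  set t' : Fin m → ℝ := fun i => if 0 ≤ a * p' i + b * q' i then 1 else 0
  obtain ⟨t, ht, hpt, hqt⟩ : ∃ t : Fin n → ℝ, (∀ j, 0 ≤ t j ∧ t j ≤ 1) ∧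
      ∑ i, p' i * t' i = ∑ j, p j * t j ∧ ∑ i, q' i * t' i = ∑ j, q j * t j := by
    obtain ⟨t, ht, h⟩ := hsub ⟨t', fun i => by simp only [t']; split_ifs <;> norm_num, rfl⟩
    exact ⟨t, ht, (Prod.mk.inj h).1, (Prod.mk.inj h).2⟩
  calc ∑ i, max (a * p' i + b * q' i) 0
      = a * ∑ i, p' i * t' i + b * ∑ i, q' i * t' i := by
        simp only [mul_sum, ← sum_add_distrib]
        refine sum_congr rfl fun i _ => ?_
        simp only [t']
        split_ifs with h
        · rw [max_eq_left h]; ring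
        · rw [max_eq_right (not_le.1 h).le]; ring
    _ = ∑ j, (a * p j + b * q j) * t j := by
        simp only [hpt, hqt, mul_sum, ← sum_add_distrib]
        exact sum_congr rfl fun j _ => by ring
    _ ≤ ∑ j, max (a * p j + b * q j) 0 := by
        refine sum_le_sum fun j _ => ?_
        obtain ⟨h0, h1⟩ := ht j
        rcases le_total 0 (a * p j + b * q j) with h | h
        · exact (mul_le_of_le_one_right h h1).trans (le_max_left _ _)
        · exact (mul_nonpos_of_nonpos_of_nonneg h h0).trans (le_max_right _ _)

lemma sum_le_sum_of_testingRegion_subset {n m : ℕ} {p q : Fin n → ℝ} {p' q' : Fin m → ℝ}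
    (hp : IsProbVec p) (hq : IsProbVec q) (hp' : IsProbVec p') (hq' : IsProbVec q')
    (hsub : testingRegion p' q' ⊆ testingRegion p q) {φ : ℝ × ℝ → ℝ}
    (hφ : ConvexOn ℝ Set.univ φ) (hhom : ∀ r : ℝ, 0 ≤ r → ∀ z, φ (r • z) = r * φ z) :
    ∑ i, φ (p' i, q' i) ≤ ∑ j, φ (p j, q j) := by
  set ψ : ℝ → ℝ := fun s => φ (1 - s, s)
  have hψ : ConvexOn ℝ Set.univ ψ := by
    have hline : ψ = φ ∘ AffineMap.lineMap ((1 : ℝ), (0 : ℝ)) (0, 1) := by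
      ext s
      simp [ψ, AffineMap.lineMap_apply_module]
    simpa [hline] using hφ.comp_affineMap (AffineMap.lineMap ((1 : ℝ), (0 : ℝ)) (0, 1))
  have hscale : ∀ x y : ℝ, 0 ≤ x → 0 ≤ y →
      (x + y) • ((1 - y / (x + y), y / (x + y)) : ℝ × ℝ) = (x, y) := by
    intro x y hx hy
    rcases (add_nonneg hx hy).eq_or_lt with hw | hw
    · obtain ⟨rfl, rfl⟩ : x = 0 ∧ y = 0 := ⟨by linarith, by linarith⟩
      simp [Prod.zero_eq_mk]
    · ext <;> simp [mul_sub, mul_div_cancel₀ _ hw.ne']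
  set T := (univ.image fun j => q j / (p j + q j)) ∪ univ.image fun i => q' i / (p' i + q' i)
  obtain ⟨γ, δ, K, c, u, hc, hR⟩ := hψ.exists_hingeSum_eqOn T
  have hterm : ∀ x y, 0 ≤ x → 0 ≤ y → y / (x + y) ∈ T →
      φ (x, y) = γ * x + (γ + δ) * y + ∑ k, c k * max (-u k * x + (1 - u k) * y) 0 := by
    intro x y hx hy hT
    rw [← mul_hingeSum_div_add γ δ c u hx hy, hR _ hT, ← hhom _ (add_nonneg hx hy),
      hscale x y hx hy]
  have hsum : ∀ {N : ℕ} (P Q : Fin N → ℝ), IsProbVec P → IsProbVec Q →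
      (∀ i, Q i / (P i + Q i) ∈ T) →
      ∑ i, φ (P i, Q i) = γ + (γ + δ) + ∑ k, c k * ∑ i, max (-u k * P i + (1 - u k) * Q i) 0 := by
    intro N P Q hP hQ hT
    rw [sum_congr rfl fun i _ => hterm _ _ (hP.1 i) (hQ.1 i) (hT i), sum_add_distrib,
      sum_add_distrib, ← mul_sum, ← mul_sum, hP.2, hQ.2, sum_comm]
    simp only [mul_sum, mul_one]
  rw [hsum p' q' hp' hq' fun i => mem_union_right _ (mem_image_of_mem _ (mem_univ i)),
    hsum p q hp hq fun j => mem_union_left _ (mem_image_of_mem _ (mem_univ j))]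
  gcongr with k
  · exact hc k
  · exact sum_max_le_of_testingRegion_subset hsub _ _

lemma IsProbVec.nonempty {ι : Type} [Fintype ι] {p : ι → ℝ} (hp : IsProbVec p) : Nonempty ι :=
  univ_nonempty_iff.1 (nonempty_of_sum_ne_zero (hp.2 ▸ one_ne_zero))

lemma testingRegion_mulVec_subset {n m : ℕ} {E : Matrix (Fin m) (Fin n) ℝ} (hE : IsStochastic E)
    (p q : Fin n → ℝ) : testingRegion (E *ᵥ p) (E *ᵥ q) ⊆ testingRegion p q := by
  rintro _ ⟨t', ht', rfl⟩
  refine ⟨t' ᵥ* E, fun j => ⟨?_, ?_⟩, ?_⟩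
  · exact sum_nonneg (s := univ) (f := fun i => t' i * E i j) fun i _ =>
      mul_nonneg (ht' i).1 (hE.1 i j)
  · calc (t' ᵥ* E) j = ∑ i, t' i * E i j := rfl
      _ ≤ ∑ i, E i j := sum_le_sum fun i _ => mul_le_of_le_one_left (hE.1 i j) (ht' i).2
      _ = 1 := hE.2 j
  · have h : ∀ v : Fin n → ℝ, (E *ᵥ v) ⬝ᵥ t' = v ⬝ᵥ (t' ᵥ* E) := fun v => by
      rw [dotProduct_comm, dotProduct_mulVec, dotProduct_comm]
    exact Prod.ext (h p) (h q)

section Stochastic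

variable {α β : Type} [Fintype α] [Fintype β]

def stochasticImage (p q : β → ℝ) : Set ((α → ℝ) × (α → ℝ)) :=
  (fun E : Matrix α β ℝ => (E *ᵥ p, E *ᵥ q)) '' {E | IsStochastic E}

lemma convex_setOf_isStochastic : Convex ℝ {E : Matrix α β ℝ | IsStochastic E} := by
  rintro E ⟨hE0, hE1⟩ F ⟨hF0, hF1⟩ a b ha hb hab
  refine ⟨fun i j => ?_, fun j => ?_⟩
  · simp only [Matrix.add_apply, Matrix.smul_apply, smul_eq_mul]
    exact add_nonneg (mul_nonneg ha (hE0 i j)) (mul_nonneg hb (hF0 i j))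
  · simp only [Matrix.add_apply, Matrix.smul_apply, smul_eq_mul, sum_add_distrib, ← mul_sum,
      hE1 j, hF1 j, hab, mul_one]

lemma isCompact_setOf_isStochastic : IsCompact {E : Matrix α β ℝ | IsStochastic E} := by
  have hclosed : IsClosed {E : Matrix α β ℝ | IsStochastic E} := by
    simp only [IsStochastic, Set.ofPred_and, Set.ofPred_forall]
    exact (isClosed_iInter fun i => isClosed_iInter fun j =>
      isClosed_le continuous_const (continuous_id.matrix_elem i j)).inter
      (isClosed_iInter fun j => isClosed_eq
        (continuous_finsetSum _ fun i _ => continuous_id.matrix_elem i j) continuous_const)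
  have hIcc := isCompact_univ_pi fun (_ : α) => isCompact_univ_pi fun (_ : β) =>
    isCompact_Icc (a := (0 : ℝ)) (b := 1)
  refine hIcc.of_isClosed_subset hclosed fun E hE i _ j _ => ⟨hE.1 i j, ?_⟩
  calc E i j ≤ ∑ i', E i' j := single_le_sum (fun i' _ => hE.1 i' j) (mem_univ i)
    _ = 1 := hE.2 j

lemma convex_stochasticImage (p q : β → ℝ) : Convex ℝ (stochasticImage (α := α) p q) :=
  convex_setOf_isStochastic.is_linear_image (f := fun E : Matrix α β ℝ => (E *ᵥ p, E *ᵥ q))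
    ⟨fun E F => by simp [add_mulVec], fun c E => by simp [smul_mulVec]⟩

lemma isCompact_stochasticImage (p q : β → ℝ) : IsCompact (stochasticImage (α := α) p q) :=
  isCompact_setOf_isStochastic.image (f := fun E : Matrix α β ℝ => (E *ᵥ p, E *ᵥ q))
    (by fun_prop)

lemma exists_isStochastic_mulVec_eq_sum_single [DecidableEq α] (σ : β → α) (p q : β → ℝ) :
    ∃ E : Matrix α β ℝ, IsStochastic E ∧
      (E *ᵥ p, E *ᵥ q) = ∑ j, ((Pi.single (σ j) (p j) : α → ℝ), (Pi.single (σ j) (q j) : α → ℝ)) :=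
    by
  refine ⟨Matrix.of fun i j => if i = σ j then 1 else 0, ⟨fun i j => ?_, fun j => ?_⟩, ?_⟩
  · simp only [Matrix.of_apply]
    split_ifs <;> norm_num
  · simp
  · ext i <;>
      simp [mulVec, dotProduct, Prod.fst_sum, Prod.snd_sum, Finset.sum_apply, Pi.single_apply]

end Stochastic

lemma map_prod_eq_sum_single {α R M F : Type*} [Fintype α] [DecidableEq α] [AddCommMonoid R]
    [AddCommMonoid M] [FunLike F ((α → R) × (α → R)) M] [AddMonoidHomClass F _ M] (f : F)
    (v w : α → R) : f (v, w) = ∑ i, f (Pi.single i (v i), Pi.single i (w i)) := by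
  rw [← map_sum]
  congr 1
  ext <;> simp [Prod.fst_sum, Prod.snd_sum]

section SupLinear

variable {ι V : Type*} [AddCommGroup V] [Module ℝ V]

lemma convexOn_iSup_linearMap [Finite ι] [Nonempty ι] (g : ι → V →ₗ[ℝ] ℝ) :
    ConvexOn ℝ Set.univ fun z => ⨆ i, g i z := by
  refine ⟨convex_univ, fun x _ y _ a b ha hb _ => ciSup_le fun i => ?_⟩
  simp only [map_add, map_smul, smul_eq_mul]
  gcongr <;> exact le_ciSup (f := fun i => g i _) (Finite.bddAbove_range _) i

lemma iSup_linearMap_smul (g : ι → V →ₗ[ℝ] ℝ) {r : ℝ} (hr : 0 ≤ r) (z : V) :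
    ⨆ i, g i (r • z) = r * ⨆ i, g i z := by
  simp [Real.mul_iSup_of_nonneg hr]

end SupLinear

/-- Blackwell's theorem: `(p,q)` relatively majorizes `(p',q')` iff the testing
region of `(p',q')` is contained in that of `(p,q)`. -/
theorem stmt5
    (n m : ℕ) (p q : Fin n → ℝ) (p' q' : Fin m → ℝ)
    (hp : IsProbVec p) (hq : IsProbVec q) (hp' : IsProbVec p') (hq' : IsProbVec q') :
    (∃ E : Matrix (Fin m) (Fin n) ℝ, IsStochastic E ∧
        E.mulVec p = p' ∧ E.mulVec q = q') ↔
      testingRegion p' q' ⊆ testingRegion p q := by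
  refine ⟨fun ⟨E, hE, hEp, hEq⟩ => hEp ▸ hEq ▸ testingRegion_mulVec_subset hE p q,
    fun hsub => ?_⟩
  by_contra hno
  have : Nonempty (Fin m) := hp'.nonempty
  have hout : (p', q') ∉ stochasticImage p q := fun ⟨E, hE, h⟩ =>
    hno ⟨E, hE, congrArg Prod.fst h, congrArg Prod.snd h⟩
  obtain ⟨f, u, hfK, hfx⟩ := geometric_hahn_banach_closed_point (convex_stochasticImage p q)
    (isCompact_stochasticImage p q).isClosed hout
  let g : Fin m → ℝ × ℝ →ₗ[ℝ] ℝ := fun i =>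
    f.toLinearMap ∘ₗ
      (LinearMap.single ℝ (fun _ => ℝ) i).prodMap (LinearMap.single ℝ (fun _ => ℝ) i)
  have hle : f (p', q') ≤ ∑ i, ⨆ k, g k (p' i, q' i) := by
    rw [map_prod_eq_sum_single f]
    exact sum_le_sum fun i _ =>
      le_ciSup (f := fun k => g k (p' i, q' i)) (Finite.bddAbove_range _) i
  have hmono := sum_le_sum_of_testingRegion_subset hp hq hp' hq' hsub
    (convexOn_iSup_linearMap g) fun r hr z => iSup_linearMap_smul g hr z
  choose σ hσ using fun j => exists_eq_ciSup_of_finite (f := fun k => g k (p j, q j))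
  obtain ⟨E, hE, hEpq⟩ := exists_isStochastic_mulVec_eq_sum_single σ p q
  have heq : f (E *ᵥ p, E *ᵥ q) = ∑ j, ⨆ k, g k (p j, q j) := by
    rw [hEpq, map_sum]
    exact sum_congr rfl fun j _ => hσ j
  linarith [hfK _ ⟨E, hE, rfl⟩]
end

section
/- Let r_1, ..., r_a be probability vectors in R^n and s a probability vector in R^m. Then max{ H(p) : p a probability vector in R^{nm}, r_x ⊗ s ≺ p for all x } ≤ log_2 m + max{ H(q) : q a probability vector in R^n, r_x ≺ q for all x }, where H is Shannon entropy and ≺ denotes majorization (v ≺ p means p can be transformed to v by a doubly stochastic matrix). -/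
open scoped BigOperators

/-- `Majorizes w v`: `v ≺ w` (majorization, finset formulation for probability
vectors of possibly different dimensions). -/
def Majorizes {α β : Type} [Fintype α] [Fintype β] (w : β → ℝ) (v : α → ℝ) : Prop :=
  ∀ S : Finset α, ∃ T : Finset β, T.card ≤ S.card ∧ ∑ i ∈ S, v i ≤ ∑ j ∈ T, w j

/-- Shannon entropy, base 2. -/
noncomputable def entropy {ι : Type} [Fintype ι] (p : ι → ℝ) : ℝ :=
  -∑ i, p i * Real.logb 2 (p i)

/-!
Sort the entries of `p` decreasingly and cut the sorted list into `n` consecutive blocks of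
`m` entries; let `q k` be the mass of the `k`-th block. The `c` largest entries of `q` carry
the `c * m` largest entries of `p`, so `p ≻ v ⊗ s` forces `q ≻ v` whenever `∑ s = 1`.
Grouping `m` entries into one costs at most `log₂ m` bits of entropy (Jensen for the concave
function `-x log x`), so `H(p) ≤ log₂ m + H(q)`.
-/

open Finset Real

theorem sum_negMulLog_le {ι : Type} [Fintype ι] (x : ι → ℝ) (hx : ∀ i, 0 ≤ x i) :
    ∑ i, negMulLog (x i) ≤ negMulLog (∑ i, x i) + (∑ i, x i) * log (Fintype.card ι) := by
  rcases (Fintype.card ι).eq_zero_or_pos with hN | hN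
  · simp [Fintype.card_eq_zero_iff.1 hN]
  set N : ℝ := ↑(Fintype.card ι)
  have hNpos : 0 < N := by positivity
  have hJensen := concaveOn_negMulLog.le_map_sum (t := univ) (w := fun _ => N⁻¹) (p := x)
    (fun _ _ => by positivity) (by simp [N, hNpos.ne']) (fun i _ => Set.mem_Ici.2 (hx i))
  simp only [smul_eq_mul, ← mul_sum, mul_comm N⁻¹ (∑ i, x i), negMulLog_mul] at hJensen
  have hNinv : negMulLog N⁻¹ = N⁻¹ * log N := by simp [negMulLog, log_inv]
  rw [hNinv] at hJensen
  have hscaled := mul_le_mul_of_nonneg_left hJensen hNpos.le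
  field_simp at hscaled
  linarith

theorem entropy_eq_sum_negMulLog_div {ι : Type} [Fintype ι] (p : ι → ℝ) :
    entropy p = (∑ i, negMulLog (p i)) / log 2 := by
  simp only [entropy, negMulLog, logb, sum_div, ← sum_neg_distrib]
  congr 1 with i
  ring

theorem entropy_le_logb_card {ι : Type} [Fintype ι] {p : ι → ℝ} (hp : IsProbVec p) :
    entropy p ≤ logb 2 (Fintype.card ι) := by
  have h := sum_negMulLog_le p hp.1
  rw [hp.2, negMulLog_one, zero_add, one_mul] at h
  rw [entropy_eq_sum_negMulLog_div, logb]
  gcongr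

theorem entropy_nonneg {ι : Type} [Fintype ι] {p : ι → ℝ} (hp : IsProbVec p) :
    0 ≤ entropy p := by
  rw [entropy_eq_sum_negMulLog_div]
  refine div_nonneg (sum_nonneg fun i _ => negMulLog_nonneg (hp.1 i) ?_) (log_nonneg one_le_two)
  exact hp.2 ▸ single_le_sum (fun j _ => hp.1 j) (mem_univ i)

theorem entropy_comp_equiv {ι κ : Type} [Fintype ι] [Fintype κ] (p : ι → ℝ) (e : κ ≃ ι) :
    entropy (p ∘ e) = entropy p := by
  simp only [entropy, Function.comp_apply, e.sum_comp (fun i => p i * logb 2 (p i))]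

theorem IsProbVec.comp_equiv {ι κ : Type} [Fintype ι] [Fintype κ] {p : ι → ℝ}
    (hp : IsProbVec p) (e : κ ≃ ι) : IsProbVec (p ∘ e) :=
  ⟨fun i => hp.1 (e i), (e.sum_comp p).trans hp.2⟩

theorem Majorizes.comp_equiv {α β γ : Type} [Fintype α] [Fintype β] [Fintype γ]
    {w : β → ℝ} {v : α → ℝ} (h : Majorizes w v) (e : γ ≃ β) : Majorizes (w ∘ e) v := by
  intro S
  obtain ⟨T, hcard, hsum⟩ := h S
  refine ⟨T.map e.symm.toEmbedding, by simpa using hcard, ?_⟩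
  simpa [sum_map] using hsum

/-- Exchange argument: trading the elements of `T \ I` for those of `I \ T` only increases
the sum. -/
theorem Finset.sum_le_sum_of_card_le_of_forall_le {α M : Type*} [AddCommMonoid M]
    [LinearOrder M] [IsOrderedAddMonoid M] {T I : Finset α} {f : α → M}
    (hf : ∀ y ∈ I, 0 ≤ f y) (hcard : #T ≤ #I) (hI : ∀ x ∉ I, ∀ y ∈ I, f x ≤ f y) :
    ∑ x ∈ T, f x ≤ ∑ x ∈ I, f x := by
  classical
  rw [← sum_inter_add_sum_sdiff T I, ← sum_inter_add_sum_sdiff I T, inter_comm]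
  gcongr _ + ?_
  have hdiff : #(T \ I) ≤ #(I \ T) := card_sdiff_le_card_sdiff_iff.2 hcard
  rcases (I \ T).eq_empty_or_nonempty with hIT | hIT
  · rw [hIT, card_empty, Nat.le_zero, card_eq_zero] at hdiff
    simp [hdiff, hIT]
  set c := (I \ T).inf' hIT f
  have hc : 0 ≤ c := le_inf' _ _ fun y hy => hf y (mem_sdiff.1 hy).1
  calc ∑ x ∈ T \ I, f x ≤ #(T \ I) • c :=
        sum_le_card_nsmul _ _ _ fun x hx =>
          le_inf' _ _ fun y hy => hI x (mem_sdiff.1 hx).2 y (mem_sdiff.1 hy).1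
    _ ≤ #(I \ T) • c := nsmul_le_nsmul_left hc hdiff
    _ ≤ ∑ x ∈ I \ T, f x := card_nsmul_le_sum _ _ _ fun y hy => inf'_le _ hy

theorem exists_perm_antitone_fst {β : Type*} [LinearOrder β] {n m : ℕ}
    (p : Fin n × Fin m → β) :
    ∃ ρ : Equiv.Perm (Fin n × Fin m), ∀ z z', z.1 < z'.1 → p (ρ z') ≤ p (ρ z) := by
  let E := finProdFinEquiv (m := n) (n := m)
  have hE : ∀ z z' : Fin n × Fin m, z.1 < z'.1 → E z < E z' := by
    intro z z' h
    rw [Fin.lt_def, finProdFinEquiv_apply_val, finProdFinEquiv_apply_val]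
    have : m * (z.1 + 1 : ℕ) ≤ m * z'.1 := Nat.mul_le_mul_left m h
    nlinarith [z.2.2]
  let σ := Tuple.sort (p ∘ E.symm)
  refine ⟨E.trans (Fin.revPerm.trans (σ.trans E.symm)), fun z z' h => ?_⟩
  exact Tuple.monotone_sort (p ∘ E.symm) (Fin.rev_le_rev.2 (hE z z' h).le)

noncomputable def fstMarginal {ι κ : Type} [Fintype κ] (D : ι × κ → ℝ) (i : ι) : ℝ :=
  ∑ j, D (i, j)

theorem IsProbVec.fstMarginal {ι κ : Type} [Fintype ι] [Fintype κ] {D : ι × κ → ℝ}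
    (hD : IsProbVec D) : IsProbVec (fstMarginal D) :=
  ⟨fun _ => sum_nonneg fun _ _ => hD.1 _, (Fintype.sum_prod_type D).symm.trans hD.2⟩

theorem entropy_le_logb_card_add_entropy_fstMarginal {ι κ : Type} [Fintype ι] [Fintype κ]
    {D : ι × κ → ℝ} (hD : IsProbVec D) :
    entropy D ≤ logb 2 (Fintype.card κ) + entropy (fstMarginal D) := by
  rw [entropy_eq_sum_negMulLog_div, entropy_eq_sum_negMulLog_div, logb, ← add_div]
  gcongr
  calc ∑ z, negMulLog (D z) = ∑ i, ∑ j, negMulLog (D (i, j)) := Fintype.sum_prod_type _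
    _ ≤ ∑ i, (negMulLog (fstMarginal D i) + fstMarginal D i * log (Fintype.card κ)) :=
        sum_le_sum fun i _ => sum_negMulLog_le _ fun j => hD.1 _
    _ = log (Fintype.card κ) + ∑ i, negMulLog (fstMarginal D i) := by
        rw [sum_add_distrib, ← sum_mul, hD.fstMarginal.2, one_mul, add_comm]

theorem Majorizes.fstMarginal_of_tensor {n m : ℕ} {D : Fin n × Fin m → ℝ}
    (hD0 : ∀ z, 0 ≤ D z) (hD : ∀ z z', z.1 < z'.1 → D z' ≤ D z)
    {s : Fin m → ℝ} (hs : ∑ j, s j = 1) {v : Fin n → ℝ}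
    (h : Majorizes D (fun z : Fin n × Fin m => v z.1 * s z.2)) :
    Majorizes (fstMarginal D) v := by
  intro S
  set K : Finset (Fin n) := {k : Fin n | (k : ℕ) < #S}
  have hK : #K = #S := by
    rw [Fin.card_filter_val_lt, min_eq_right (by simpa using S.card_le_univ)]
  obtain ⟨T, hcard, hsum⟩ := h (S ×ˢ univ)
  refine ⟨K, hK.le, ?_⟩
  calc ∑ k ∈ S, v k = ∑ z ∈ S ×ˢ univ, v z.1 * s z.2 := by
        simp [sum_product, ← mul_sum, hs]
    _ ≤ ∑ z ∈ T, D z := hsum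
    _ ≤ ∑ z ∈ K ×ˢ univ, D z := by
        refine sum_le_sum_of_card_le_of_forall_le (fun y _ => hD0 y) ?_ fun x hx y hy => ?_
        · simpa [card_product, hK] using hcard
        · simp only [mem_product, mem_univ, and_true, K, mem_filter, true_and, not_lt] at hx hy
          exact hD y x (Fin.lt_def.2 (hy.trans_le hx))
    _ = ∑ k ∈ K, fstMarginal D k := sum_product _ _ _

theorem exists_majorizes_entropy_le {n m : ℕ} {p : Fin n × Fin m → ℝ} (hp : IsProbVec p)
    {s : Fin m → ℝ} (hs : ∑ j, s j = 1) :
    ∃ q : Fin n → ℝ, IsProbVec q ∧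
      (∀ v : Fin n → ℝ, Majorizes p (fun z : Fin n × Fin m => v z.1 * s z.2) → Majorizes q v) ∧
      entropy p ≤ logb 2 m + entropy q := by
  obtain ⟨ρ, hρ⟩ := exists_perm_antitone_fst p
  have hD := hp.comp_equiv ρ
  refine ⟨fstMarginal (p ∘ ρ), hD.fstMarginal,
    fun v hv => (hv.comp_equiv ρ).fstMarginal_of_tensor hD.1 hρ hs, ?_⟩
  simpa [entropy_comp_equiv] using entropy_le_logb_card_add_entropy_fstMarginal hD

theorem stmt7_general
    (a n m : ℕ) (r : Fin a → Fin n → ℝ) (s : Fin m → ℝ)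
    (hs : IsProbVec s) :
    sSup {h : ℝ | ∃ p : Fin n × Fin m → ℝ, IsProbVec p ∧
        (∀ x, Majorizes p (fun j : Fin n × Fin m => r x j.1 * s j.2)) ∧
        h = entropy p} ≤
      Real.logb 2 m +
        sSup {h : ℝ | ∃ q : Fin n → ℝ, IsProbVec q ∧
          (∀ x, Majorizes q (r x)) ∧ h = entropy q} := by
  set B := {h : ℝ | ∃ q : Fin n → ℝ, IsProbVec q ∧ (∀ x, Majorizes q (r x)) ∧ h = entropy q}
  have hB : BddAbove B :=
    ⟨logb 2 n, by rintro _ ⟨q, hq, -, rfl⟩; simpa using entropy_le_logb_card hq⟩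
  have hB0 : 0 ≤ sSup B := sSup_nonneg (by rintro _ ⟨q, hq, -, rfl⟩; exact entropy_nonneg hq)
  have hlogm : 0 ≤ logb 2 m := div_nonneg (log_natCast_nonneg m) (log_nonneg one_le_two)
  refine Real.sSup_le ?_ (add_nonneg hlogm hB0)
  rintro _ ⟨p, hp, hmaj, rfl⟩
  obtain ⟨q, hq, htransfer, hent⟩ := exists_majorizes_entropy_le hp hs.2
  calc entropy p ≤ logb 2 m + entropy q := hent
    _ ≤ logb 2 m + sSup B := by gcongr; exact le_csSup hB ⟨q, hq, fun x => htransfer _ (hmaj x), rfl⟩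

/-- The maximal entropy of a distribution majorizing every `r_x ⊗ s` is at most
`log₂ m` plus the maximal entropy of a distribution majorizing every `r_x`. -/
theorem stmt7
    (a n m : ℕ) (r : Fin a → Fin n → ℝ) (s : Fin m → ℝ)
    (hr : ∀ x, IsProbVec (r x)) (hs : IsProbVec s) :
    sSup {h : ℝ | ∃ p : Fin n × Fin m → ℝ, IsProbVec p ∧
        (∀ x, Majorizes p (fun j : Fin n × Fin m => r x j.1 * s j.2)) ∧
        h = entropy p} ≤
      Real.logb 2 m +
        sSup {h : ℝ | ∃ q : Fin n → ℝ, IsProbVec q ∧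
          (∀ x, Majorizes q (r x)) ∧ h = entropy q} :=
  stmt7_general a n m r s hs
end
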